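/- arXiv:2102.13409 — 5 statements merged into one kernel-verified Lean document; each statement's English description precedes it below -/
import Mathlib

section
/- In the rendezvous game on a connected graph G with Facilitator's agents starting at vertices s and t, if Divider has λ_G(s,t) agents (where λ_G(s,t) is the minimum size of a vertex (s,t)-separator), then Divider has a winning strategy; equivalently, d_G(s,t) ≤ λ_G(s,t). -/
namespace Rendezvous

variable {V : Type*}

/-- One agent's move: stay put or move along an edge. -/
def Step (G : SimpleGraph V) (a b : V) : Prop := a = b ∨ G.Adj a b

/-- Adjacency of multisets of agent positions: there is a bijective pairing such
that every agent stays put or moves along an edge. -/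
def MAdj (G : SimpleGraph V) (D D' : Multiset V) : Prop := Multiset.Rel (Step G) D D'

/-- `FWin G n a b D`: with Facilitator's agents on `a`, `b`, Divider's agents on the
multiset `D`, and Facilitator to move, Facilitator can force his two agents to meet
within at most `n` moves, whatever Divider does. -/
def FWin (G : SimpleGraph V) : ℕ → V → V → Multiset V → Prop
  | 0, a, b, _ => a = b
  | n + 1, a, b, D => a = b ∨ ∃ a' b', Step G a a' ∧ Step G b b' ∧ a' ∉ D ∧ b' ∉ D ∧
      (a' = b' ∨ ∀ D', MAdj G D D' → a' ∉ D' → b' ∉ D' → FWin G n a' b' D')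

/-- Divider with `k` agents has a winning strategy in the rendezvous game on `G`
starting from `s` and `t`: there is an initial placement from which Facilitator can
never force a meeting. -/
def DividerWins (G : SimpleGraph V) (s t : V) (k : ℕ) : Prop :=
  ∃ D : Multiset V, Multiset.card D = k ∧ s ∉ D ∧ t ∉ D ∧ ∀ n, ¬ FWin G n s t D

/-- `d_G(s,t)`: the minimum number of Divider agents sufficient for Divider to win
(`⊤` if no number suffices, e.g. when `s = t` or `s`, `t` are adjacent). -/
noncomputable def dNum (G : SimpleGraph V) (s t : V) : ℕ∞ :=
  sInf {n : ℕ∞ | ∃ k : ℕ, (k : ℕ∞) = n ∧ DividerWins G s t k}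

/-- A vertex `(s,t)`-separator: a set of vertices avoiding `s` and `t` meeting
every walk from `s` to `t`. -/
def IsSeparator (G : SimpleGraph V) (s t : V) (S : Finset V) : Prop :=
  s ∉ S ∧ t ∉ S ∧ ∀ p : G.Walk s t, ∃ v ∈ p.support, v ∈ S

/-- `λ_G(s,t)`: minimum size of a vertex `(s,t)`-separator (`⊤` if none exists). -/
noncomputable def lambdaNum (G : SimpleGraph V) (s t : V) : ℕ∞ :=
  sInf {n : ℕ∞ | ∃ S : Finset V, (S.card : ℕ∞) = n ∧ IsSeparator G s t S}

end Rendezvous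

open Rendezvous

/-! If Divider places one agent on each vertex of a minimum separator `S` and never moves
them, Facilitator's agents stay in the components of `s` and of `t` in `G - S`, which are
distinct because every `s`–`t` walk meets `S`; so they never meet. -/

namespace Rendezvous

variable {V : Type*} {G : SimpleGraph V}

lemma mAdj_refl (D : Multiset V) : MAdj G D D :=
  Multiset.rel_refl_of_refl_on fun _ _ => Or.inl rfl

def ReachableAvoiding (G : SimpleGraph V) (D : Multiset V) (s a : V) : Prop :=
  ∃ p : G.Walk s a, ∀ v ∈ p.support, v ∉ D

section ReachableAvoiding

variable {D : Multiset V} {s t a a' b : V}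

lemma ReachableAvoiding.refl (hs : s ∉ D) : ReachableAvoiding G D s s :=
  ⟨.nil, by simpa using hs⟩

lemma ReachableAvoiding.step (h : ReachableAvoiding G D s a) (hstep : Step G a a')
    (ha' : a' ∉ D) : ReachableAvoiding G D s a' := by
  obtain ⟨p, hp⟩ := h
  rcases hstep with rfl | hadj
  · exact ⟨p, hp⟩
  · refine ⟨p.concat hadj, fun v hv => ?_⟩
    rw [SimpleGraph.Walk.support_concat, List.mem_append, List.mem_singleton] at hv
    rcases hv with hv | rfl
    exacts [hp v hv, ha']

lemma ReachableAvoiding.ne (hsep : ∀ p : G.Walk s t, ∃ v ∈ p.support, v ∈ D)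
    (ha : ReachableAvoiding G D s a) (hb : ReachableAvoiding G D t b) : a ≠ b := by
  rintro rfl
  obtain ⟨p, hp⟩ := ha
  obtain ⟨q, hq⟩ := hb
  obtain ⟨v, hv, hvD⟩ := hsep (p.append q.reverse)
  rw [SimpleGraph.Walk.mem_support_append_iff, SimpleGraph.Walk.support_reverse,
    List.mem_reverse] at hv
  rcases hv with hv | hv
  exacts [hp v hv hvD, hq v hv hvD]

lemma not_fWin_of_reachableAvoiding (hsep : ∀ p : G.Walk s t, ∃ v ∈ p.support, v ∈ D)
    (n : ℕ) (ha : ReachableAvoiding G D s a) (hb : ReachableAvoiding G D t b) :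
    ¬ FWin G n a b D := by
  induction n generalizing a b with
  | zero => exact ha.ne hsep hb
  | succ n ih =>
    rintro (rfl | ⟨a', b', hsa, hsb, ha', hb', hmeet | hnext⟩)
    · exact ha.ne hsep hb rfl
    · exact (ha.step hsa ha').ne hsep (hb.step hsb hb') hmeet
    · exact ih (ha.step hsa ha') (hb.step hsb hb') (hnext D (mAdj_refl D) ha' hb')

end ReachableAvoiding

variable {s t : V}

lemma dividerWins_of_isSeparator {S : Finset V} (hsep : IsSeparator G s t S) :
    DividerWins G s t S.card :=
  ⟨S.val, rfl, hsep.1, hsep.2.1, fun n =>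
    not_fWin_of_reachableAvoiding hsep.2.2 n (.refl hsep.1) (.refl hsep.2.1)⟩

lemma dNum_le_of_dividerWins {k : ℕ} (h : DividerWins G s t k) : dNum G s t ≤ k :=
  sInf_le ⟨k, rfl, h⟩

lemma exists_isSeparator_card_eq_lambdaNum (h : lambdaNum G s t ≠ ⊤) :
    ∃ S : Finset V, IsSeparator G s t S ∧ (S.card : ℕ∞) = lambdaNum G s t := by
  have hne : {n : ℕ∞ | ∃ S : Finset V, (S.card : ℕ∞) = n ∧ IsSeparator G s t S}.Nonempty :=
    Set.nonempty_iff_ne_empty.2 fun he => h (by rw [lambdaNum, he, sInf_empty])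
  obtain ⟨S, hS, hsep⟩ := csInf_mem hne
  exact ⟨S, hsep, hS⟩

end Rendezvous

theorem divider_wins_with_lambda_agents_general {V : Type*} (G : SimpleGraph V) (s t : V) :
    (∀ k : ℕ, (k : ℕ∞) = lambdaNum G s t → DividerWins G s t k) ∧
      dNum G s t ≤ lambdaNum G s t := by
  have hwin : ∀ k : ℕ, (k : ℕ∞) = lambdaNum G s t → DividerWins G s t k := by
    intro k hk
    obtain ⟨S, hsep, hS⟩ := exists_isSeparator_card_eq_lambdaNum (hk ▸ ENat.natCast_ne_top k)
    rw [← hk, Nat.cast_inj] at hS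
    exact hS ▸ dividerWins_of_isSeparator hsep
  refine ⟨hwin, ?_⟩
  cases h : lambdaNum G s t using ENat.recTopCoe with
  | top => exact le_top
  | coe k => exact dNum_le_of_dividerWins (hwin k h.symm)

/-- on a connected graph `G` with Facilitator starting at the distinct
nonadjacent vertices `s` and `t`, Divider with `λ_G(s,t)` agents has a winning
strategy; equivalently, `d_G(s,t) ≤ λ_G(s,t)`. -/
theorem divider_wins_with_lambda_agents {V : Type*} (G : SimpleGraph V)
    (hconn : G.Connected) (s t : V) (hst : s ≠ t) (hadj : ¬ G.Adj s t) :
    (∀ k : ℕ, (k : ℕ∞) = lambdaNum G s t → DividerWins G s t k) ∧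
      dNum G s t ≤ lambdaNum G s t :=
  divider_wins_with_lambda_agents_general G s t
end

section
/- If the two agents R and J of Facilitator occupy vertices of a cycle C of a graph G, the cycle C has a shortcut, and Divider has a single agent, then Facilitator has a strategy ensuring that within at most ℓ(C) moves, R and J occupy vertices of a cycle C' with ℓ(C') < ℓ(C). -/
namespace Rendezvous

variable {V : Type*}

/-- A cycle `c` of `G` has a shortcut: for some distinct `u, v ∈ V(c)` there is a
`(u,v)`-path in `G − (V(c) \ {u,v})` strictly shorter than both internally
vertex-disjoint `(u,v)`-paths of `c` (equivalently, shorter than their minimum,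
the distance between `u` and `v` in the cycle). -/
def HasShortcut (G : SimpleGraph V) {x : V} (c : G.Walk x x) : Prop :=
  ∃ (u v : V) (hu : u ∈ c.toSubgraph.verts) (hv : v ∈ c.toSubgraph.verts), u ≠ v ∧
    ∃ p : G.Walk u v, p.IsPath ∧
      (∀ w ∈ p.support, w ∈ c.toSubgraph.verts → w = u ∨ w = v) ∧
      p.length < c.toSubgraph.coe.dist ⟨u, hu⟩ ⟨v, hv⟩

/-- `FForce G goal n a b D`: Facilitator (moving first, agents at `a`, `b`, Divider's
agents at `D`) can force a position satisfying `goal` within at most `n` of his moves. -/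
def FForce (G : SimpleGraph V) (goal : V → V → Prop) : ℕ → V → V → Multiset V → Prop
  | 0, a, b, _ => goal a b
  | n + 1, a, b, D => goal a b ∨ ∃ a' b', Step G a a' ∧ Step G b b' ∧ a' ∉ D ∧ b' ∉ D ∧
      (goal a' b' ∨ ∀ D', MAdj G D D' → a' ∉ D' → b' ∉ D' → FForce G goal n a' b' D')

end Rendezvous

open Rendezvous

open SimpleGraph Walk

namespace SimpleGraph

variable {V : Type*} {G : SimpleGraph V} {u v w : V}

lemma Walk.IsPath.start_notMem_support_tail {p : G.Walk u v} (hp : p.IsPath) :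
    u ∉ p.support.tail :=
  (List.nodup_cons.mp (p.cons_tail_support ▸ hp.support_nodup)).1

lemma Walk.IsPath.eq_of_start_mem_support_dropUntil [DecidableEq V] {p : G.Walk u v}
    (hp : p.IsPath) (hw : w ∈ p.support) (hu : u ∈ (p.dropUntil w hw).support) : u = w := by
  by_contra h
  exact (p.take_spec hw ▸ hp).ne_of_mem_support_of_append h
    (p.takeUntil w hw).start_mem_support hu rfl

lemma Walk.IsPath.isCycle_append_of_inter_subset {p : G.Walk u v} {q : G.Walk v u}
    (hp : p.IsPath) (hq : q.IsPath) (hpq : ∀ w ∈ p.support, w ∈ q.support → w = u ∨ w = v)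
    (hn : 1 < p.length ∨ 1 < q.length) : (p.append q).IsCycle := by
  refine hp.isCycle_append hq (List.disjoint_left.mpr fun w hwp hwq => ?_) hn
  rcases hpq w (List.mem_of_mem_tail hwp) (List.mem_of_mem_tail hwq) with rfl | rfl
  · exact hp.start_notMem_support_tail hwp
  · exact hq.start_notMem_support_tail hwq

lemma Walk.IsCycle.inter_subset_of_append {p : G.Walk u v} {q : G.Walk v u}
    (hc : (p.append q).IsCycle) : ∀ w ∈ p.support, w ∈ q.support → w = u ∨ w = v := by
  have hdisj := (List.nodup_append'.mp (tail_support_append p q ▸ hc.support_nodup)).2.2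
  intro w hwp hwq
  rw [← p.cons_tail_support, List.mem_cons] at hwp
  rw [← q.cons_tail_support, List.mem_cons] at hwq
  rcases hwp with rfl | hwp
  · exact Or.inl rfl
  rcases hwq with rfl | hwq
  · exact Or.inr rfl
  exact (List.disjoint_left.mp hdisj hwp hwq).elim

lemma Walk.IsCycle.isPath_of_append {p : G.Walk u v} {q : G.Walk v u} (huv : u ≠ v)
    (hc : (p.append q).IsCycle) : p.IsPath ∧ q.IsPath :=
  ⟨hc.isPath_of_append_left (not_nil_of_ne huv.symm),
    hc.isPath_of_append_right (not_nil_of_ne huv)⟩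

lemma Walk.IsCycle.exists_split_at {x : V} {c : G.Walk x x} (hc : c.IsCycle)
    (hu : u ∈ c.support) (hv : v ∈ c.support) :
    ∃ (p : G.Walk u v) (q : G.Walk v u), (p.append q).IsCycle ∧
      (p.append q).toSubgraph = c.toSubgraph ∧ (p.append q).length = c.length := by
  classical
  have hv' : v ∈ (c.rotate u hu).support := by
    rwa [← mem_verts_toSubgraph, c.toSubgraph_rotate hu, mem_verts_toSubgraph]
  refine ⟨(c.rotate u hu).takeUntil v hv', (c.rotate u hu).dropUntil v hv', ?_⟩
  rw [take_spec]
  exact ⟨hc.rotate hu, c.toSubgraph_rotate hu, c.length_rotate u hu⟩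

lemma Subgraph.dist_coe_le_length {H : G.Subgraph} (p : G.Walk u v) (hp : p.toSubgraph ≤ H)
    (hu : u ∈ H.verts) (hv : v ∈ H.verts) : H.coe.dist ⟨u, hu⟩ ⟨v, hv⟩ ≤ p.length := by
  have hlen : p.mapToSubgraph.length = p.length := by
    rw [← length_map p.toSubgraph.hom, p.map_mapToSubgraph_hom]; rfl
  exact (dist_le (p.mapToSubgraph.map (Subgraph.inclusion hp))).trans_eq
    ((length_map _ _).trans hlen)

end SimpleGraph

namespace Rendezvous

variable {V : Type*} {G : SimpleGraph V}

def OnCycleShorterThan (G : SimpleGraph V) (n : ℕ) (a b : V) : Prop :=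
  ∃ (y : V) (c : G.Walk y y), c.IsCycle ∧ c.length < n ∧
    a ∈ c.toSubgraph.verts ∧ b ∈ c.toSubgraph.verts

lemma fforce_of_goal {goal : V → V → Prop} {a b : V} {D : Multiset V} (h : goal a b) :
    ∀ n, FForce G goal n a b D
  | 0 => h
  | _ + 1 => Or.inl h

lemma notMem_or_notMem_of_card_le_one {D : Multiset V} (hD : Multiset.card D ≤ 1) {x y : V}
    (hxy : x ≠ y) : x ∉ D ∨ y ∉ D := by
  rcases Nat.le_one_iff_eq_zero_or_eq_one.mp hD with h | h
  · simp [Multiset.card_eq_zero.mp h]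
  · obtain ⟨d, rfl⟩ := Multiset.card_eq_one.mp h
    grind [Multiset.mem_singleton]

theorem fforce_of_disjoint_walks {goal : V → V → Prop} {n : ℕ} {a b t₁ t₂ : V}
    (q₁ : G.Walk a t₁) (q₂ : G.Walk b t₂) (hlen : q₁.length + q₂.length ≤ n)
    (hdisj : ∀ z ∈ q₁.support, z ∉ q₂.support)
    (hgoal₁ : ∀ w ∈ q₂.support, goal t₁ w) (hgoal₂ : ∀ z ∈ q₁.support, goal z t₂)
    {D : Multiset V} (hD : Multiset.card D ≤ 1) (haD : a ∉ D) (hbD : b ∉ D) :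
    FForce G goal n a b D := by
  induction n generalizing a b D with
  | zero =>
    obtain ⟨⟩ := q₁
    · exact hgoal₁ b q₂.start_mem_support
    · simp at hlen
  | succ n ih =>
    cases q₁ with
    | nil => exact fforce_of_goal (hgoal₁ b q₂.start_mem_support) _
    | @cons _ a₁ _ h₁ q₁ =>
    cases q₂ with
    | nil => exact fforce_of_goal (hgoal₂ a (start_mem_support _)) _
    | @cons _ b₁ _ h₂ q₂ =>
    have hcard {D'} (hD' : MAdj G D D') : Multiset.card D' ≤ 1 :=
      Multiset.card_eq_card_of_rel hD' ▸ hD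
    have hab₁ : a₁ ≠ b₁ := fun h => hdisj a₁ (by simp) (by simp [h])
    rcases notMem_or_notMem_of_card_le_one hD hab₁ with ha₁ | hb₁
    · refine Or.inr ⟨a₁, b, .inr h₁, .inl rfl, ha₁, hbD, .inr fun D' hD' ha' hb' => ?_⟩
      refine ih q₁ (cons h₂ q₂) ?_ (fun z hz => hdisj z (by simp [hz])) hgoal₁
        (fun z hz => hgoal₂ z (by simp [hz])) (hcard hD') ha' hb'
      simp only [length_cons] at hlen ⊢
      omega
    · refine Or.inr ⟨a, b₁, .inl rfl, .inr h₂, haD, hb₁, .inr fun D' hD' ha' hb' => ?_⟩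
      refine ih (cons h₁ q₁) q₂ ?_ (fun z hz hz' => hdisj z hz (by simp [hz']))
        (fun w hw => hgoal₁ w (by simp [hw])) hgoal₂ (hcard hD') ha' hb'
      simp only [length_cons] at hlen ⊢
      omega

lemma onCycleShorterThan_of_shortcut {x y : V} {n : ℕ} {s : G.Walk x y} {q : G.Walk y x}
    (hxy : x ≠ y) (hs : s.IsPath) (hq : q.IsPath)
    (hsq : ∀ w ∈ s.support, w ∈ q.support → w = x ∨ w = y) (hlt : s.length < q.length)
    (hn : s.length + q.length < n) :
    ∀ z ∈ q.support, ∀ w ∈ q.support, OnCycleShorterThan G n z w := by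
  intro z hz w hw
  have hs₀ : s.length ≠ 0 := fun h => hxy (eq_of_length_eq_zero h)
  refine ⟨x, s.append q, hs.isCycle_append_of_inter_subset hq hsq (by omega),
    (length_append s q).symm ▸ hn, ?_, ?_⟩ <;> simp [*]

theorem fforce_of_mem_arcs [DecidableEq V] {goal : V → V → Prop} {n : ℕ} {u v a b : V}
    {p₁ : G.Walk u v} {p₂ : G.Walk v u} (hp₁ : p₁.IsPath) (hp₂ : p₂.IsPath)
    (hp₁₂ : ∀ w ∈ p₁.support, w ∈ p₂.support → w = u ∨ w = v)
    (hlen : p₁.length + p₂.length ≤ n)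
    (hgoal₁ : ∀ z ∈ p₁.support, ∀ w ∈ p₁.support, goal z w)
    (hgoal₂ : ∀ z ∈ p₂.support, ∀ w ∈ p₂.support, goal z w)
    (ha : a ∈ p₁.support) (hb : b ∈ p₁.support ∨ b ∈ p₂.support)
    {D : Multiset V} (hD : Multiset.card D ≤ 1) (haD : a ∉ D) (hbD : b ∉ D) :
    FForce G goal n a b D := by
  by_cases hb₁ : b ∈ p₁.support
  · exact fforce_of_goal (hgoal₁ a ha b hb₁) n
  replace hb := hb.resolve_left hb₁
  by_cases ha₂ : a ∈ p₂.support
  · exact fforce_of_goal (hgoal₂ a ha₂ b hb) n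
  have hsub₁ := p₁.support_dropUntil_subset_support ha
  have hsub₂ := p₂.support_dropUntil_subset_support hb
  refine fforce_of_disjoint_walks (p₁.dropUntil a ha) (p₂.dropUntil b hb) ?_ ?_
    (fun w hw => hgoal₂ v p₂.start_mem_support w (hsub₂ hw))
    (fun z hz => hgoal₁ z (hsub₁ hz) u p₁.start_mem_support) hD haD hbD
  · have := p₁.length_dropUntil_le_length ha
    have := p₂.length_dropUntil_le_length hb
    omega
  · intro z hz₁ hz₂
    rcases hp₁₂ z (hsub₁ hz₁) (hsub₂ hz₂) with rfl | rfl
    · exact ha₂ (hp₁.eq_of_start_mem_support_dropUntil ha hz₁ ▸ p₂.end_mem_support)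
    · exact hb₁ (hp₂.eq_of_start_mem_support_dropUntil hb hz₂ ▸ p₁.end_mem_support)

end Rendezvous

/-- if Facilitator's agents `R`, `J` occupy vertices `a`, `b` of a cycle
`c` of `G` that has a shortcut, and Divider has a single agent, then Facilitator has a
strategy ensuring that within at most `ℓ(c)` moves his agents occupy vertices of a
cycle `c'` with `ℓ(c') < ℓ(c)`. -/
theorem facilitator_reaches_shorter_cycle {V : Type*} (G : SimpleGraph V)
    {x : V} (c : G.Walk x x) (hc : c.IsCycle) (hsc : HasShortcut G c)
    (a b : V) (ha : a ∈ c.toSubgraph.verts) (hb : b ∈ c.toSubgraph.verts)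
    (D : Multiset V) (hD : Multiset.card D = 1) (haD : a ∉ D) (hbD : b ∉ D) :
    FForce G
      (fun a' b' => ∃ (y : V) (c' : G.Walk y y), c'.IsCycle ∧ c'.length < c.length ∧
        a' ∈ c'.toSubgraph.verts ∧ b' ∈ c'.toSubgraph.verts)
      c.length a b D := by
  classical
  obtain ⟨u, v, hu, hv, huv, s, hs, hsv, hslt⟩ := hsc
  obtain ⟨p₁, p₂, hcyc, hsub, hlen⟩ :=
    hc.exists_split_at (c.mem_verts_toSubgraph.mp hu) (c.mem_verts_toSubgraph.mp hv)
  rw [length_append] at hlen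
  obtain ⟨hp₁, hp₂⟩ := hcyc.isPath_of_append huv
  have hp₁₂ := hcyc.inter_subset_of_append
  have hverts (w : V) : w ∈ c.toSubgraph.verts ↔ w ∈ p₁.support ∨ w ∈ p₂.support := by
    simp [← hsub]
  have hle : p₁.toSubgraph ≤ c.toSubgraph ∧ p₂.toSubgraph ≤ c.toSubgraph := by
    simp [← hsub, toSubgraph_append]
  have hs₁ : s.length < p₁.length := hslt.trans_le (Subgraph.dist_coe_le_length p₁ hle.1 hu hv)
  have hs₂ : s.length < p₂.length := by
    simpa using hslt.trans_le (Subgraph.dist_coe_le_length p₂.reverse (by simpa using hle.2) hu hv)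
  have hgoal₁ : ∀ z ∈ p₁.support, ∀ w ∈ p₁.support, OnCycleShorterThan G c.length z w :=
    onCycleShorterThan_of_shortcut huv.symm hs.reverse hp₁
      (fun w hw h => (hsv w (by simpa using hw) ((hverts w).2 (.inl h))).symm)
      (by rwa [length_reverse]) (by rw [length_reverse]; omega)
  have hgoal₂ : ∀ z ∈ p₂.support, ∀ w ∈ p₂.support, OnCycleShorterThan G c.length z w :=
    onCycleShorterThan_of_shortcut huv hs hp₂ (fun w hw h => hsv w hw ((hverts w).2 (.inr h)))
      hs₂ (by omega)
  rcases (hverts a).1 ha with ha | ha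
  · exact fforce_of_mem_arcs hp₁ hp₂ hp₁₂ hlen.le hgoal₁ hgoal₂ ha ((hverts b).1 hb) hD.le haD hbD
  · exact fforce_of_mem_arcs hp₂ hp₁ (fun w h₂ h₁ => (hp₁₂ w h₁ h₂).symm) (by omega) hgoal₂ hgoal₁
      ha ((hverts b).1 hb).symm hD.le haD hbD
end

section
/- Suppose Facilitator's agents R and J occupy vertices of a cycle C in a graph G that has no shortcut, and Divider's unique agent occupies a vertex z of C. Then Facilitator has a winning strategy taking at most ℓ(C)/2 moves: moving R and J toward each other along the unique path in C − z connecting their positions. -/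
open Rendezvous

theorem ZMod.min_le_natAbs_of_intCast_eq {n k : ℕ} (hk : k ≤ n) {s : ℤ}
    (h : (s : ZMod n) = k) : min k (n - k) ≤ s.natAbs := by
  rw [← Int.cast_natCast, ZMod.intCast_eq_intCast_iff_dvd_sub] at h
  obtain ⟨m, hm⟩ := h
  rcases le_or_gt m 0 with hm0 | hm0
  · have : (n : ℤ) * m ≤ 0 := Int.mul_nonpos_of_nonneg_of_nonpos (by positivity) hm0
    omega
  · have : (n : ℤ) ≤ n * m := le_mul_of_one_le_right (by positivity) hm0
    omega

namespace SimpleGraph.Walk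

variable {V : Type*} {G : SimpleGraph V}

theorem exists_intCast_eq_sub_of_adj {W R : Type*} [AddCommGroupWithOne R] {H : SimpleGraph W}
    (f : W → R) (hf : ∀ v w, H.Adj v w → f w - f v = 1 ∨ f w - f v = -1) :
    ∀ {v w : W} (p : H.Walk v w), ∃ s : ℤ, s.natAbs ≤ p.length ∧ (s : R) = f w - f v
  | _, _, nil => ⟨0, by simp⟩
  | _, _, cons h p => by
    obtain ⟨s, hs, hsf⟩ := exists_intCast_eq_sub_of_adj f hf p
    rw [length_cons]
    rcases hf _ _ h with hstep | hstep
    · refine ⟨s + 1, by omega, ?_⟩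
      rw [Int.cast_add, hsf, Int.cast_one, ← hstep]
      abel
    · refine ⟨s - 1, by omega, ?_⟩
      rw [Int.cast_sub, hsf, Int.cast_one, ← neg_neg (1 : R), ← hstep]
      abel

open scoped Classical in
noncomputable def cycleIndex {u : V} (c : G.Walk u u) (v : V) : ZMod c.length :=
  if h : ∃ i < c.length, c.getVert i = v then (h.choose : ZMod c.length) else 0

namespace IsCycle

variable {u : V} {c : G.Walk u u}

theorem cycleIndex_getVert (hc : c.IsCycle) {i : ℕ} (hi : i ≤ c.length) :
    cycleIndex c (c.getVert i) = i := by
  have h3 := hc.three_le_length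
  have hlt : ∀ i < c.length, cycleIndex c (c.getVert i) = i := fun i hi => by
    have h : ∃ j < c.length, c.getVert j = c.getVert i := ⟨i, hi, rfl⟩
    rw [cycleIndex, dif_pos h,
      hc.getVert_injOn' (by simp only [Set.mem_ofPred_eq]; omega)
        (by simp only [Set.mem_ofPred_eq]; omega) h.choose_spec.2]
  obtain hi | rfl := hi.lt_or_eq
  · exact hlt i hi
  · rw [getVert_length, ZMod.natCast_self, ← Nat.cast_zero, ← hlt 0 (by omega), getVert_zero]

theorem cycleIndex_sub_of_adj (hc : c.IsCycle) {v w : V} (h : c.toSubgraph.Adj v w) :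
    cycleIndex c w - cycleIndex c v = 1 ∨ cycleIndex c w - cycleIndex c v = -1 := by
  obtain ⟨i, hs, hi⟩ := (toSubgraph_adj_iff c).mp h
  rcases Sym2.eq_iff.mp hs with ⟨rfl, rfl⟩ | ⟨rfl, rfl⟩
  all_goals rw [hc.cycleIndex_getVert (by omega), hc.cycleIndex_getVert (by omega)]; push_cast
  · exact Or.inl (by ring)
  · exact Or.inr (by ring)

theorem min_le_dist_getVert (hc : c.IsCycle) {k : ℕ} (hk : k ≤ c.length) :
    min k (c.length - k) ≤ c.toSubgraph.coe.dist ⟨u, c.start_mem_verts_toSubgraph⟩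
      ⟨c.getVert k, c.mem_verts_toSubgraph.mpr (c.getVert_mem_support k)⟩ := by
  obtain ⟨p, hp⟩ := c.toSubgraph_connected.coe.exists_walk_length_eq_dist
    ⟨u, c.start_mem_verts_toSubgraph⟩
    ⟨c.getVert k, c.mem_verts_toSubgraph.mpr (c.getVert_mem_support k)⟩
  obtain ⟨s, hs, hsf⟩ := exists_intCast_eq_sub_of_adj (fun v => cycleIndex c v.1)
    (fun _ _ h => hc.cycleIndex_sub_of_adj h) p
  have hu : cycleIndex c u = 0 := by
    simpa using hc.cycleIndex_getVert (Nat.zero_le _)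
  rw [hc.cycleIndex_getVert hk, hu, sub_zero] at hsf
  exact hp ▸ (ZMod.min_le_natAbs_of_intCast_eq hk hsf).trans hs

end IsCycle

end SimpleGraph.Walk

namespace Rendezvous

open SimpleGraph Walk

variable {V : Type*} {G : SimpleGraph V}

theorem FWin.symm : ∀ {n : ℕ} {a b : V} {D : Multiset V}, FWin G n a b D → FWin G n b a D
  | 0, _, _, _, h => Eq.symm h
  | _ + 1, _, _, _, .inl h => .inl h.symm
  | _ + 1, _, _, _, .inr ⟨a', b', ha, hb, haD, hbD, .inl h⟩ =>
    .inr ⟨b', a', hb, ha, hbD, haD, .inl h.symm⟩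
  | _ + 1, _, _, _, .inr ⟨a', b', ha, hb, haD, hbD, .inr h⟩ =>
    .inr ⟨b', a', hb, ha, hbD, haD, .inr fun D' hD' hbD' haD' => (h D' hD' haD' hbD').symm⟩

theorem mAdj_singleton_left {d : V} {D' : Multiset V} (h : MAdj G {d} D') :
    ∃ d', Step G d d' ∧ D' = {d'} := by
  rw [MAdj, ← Multiset.cons_zero, Multiset.rel_cons_left] at h
  obtain ⟨d', D'', hd', hD'', rfl⟩ := h
  rw [Multiset.rel_zero_left.mp hD'']
  exact ⟨d', hd', rfl⟩

open scoped Classical in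
theorem dist_le_length_of_not_hasShortcut {x : V} {c : G.Walk x x} (hns : ¬ HasShortcut G c)
    {u v : V} (hu : u ∈ c.toSubgraph.verts) (hv : v ∈ c.toSubgraph.verts) (p : G.Walk u v) :
    c.toSubgraph.coe.dist ⟨u, hu⟩ ⟨v, hv⟩ ≤ p.length := by
  obtain rfl | huv := eq_or_ne u v
  · simp
  refine le_trans ?_ p.length_bypass_le_length
  by_cases hm : ∃ m ∈ p.bypass.support, m ∈ c.toSubgraph.verts ∧ m ≠ u ∧ m ≠ v
  · obtain ⟨m, hmp, hmc, hmu, hmv⟩ := hm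
    calc c.toSubgraph.coe.dist ⟨u, hu⟩ ⟨v, hv⟩
        ≤ c.toSubgraph.coe.dist ⟨u, hu⟩ ⟨m, hmc⟩ + c.toSubgraph.coe.dist ⟨m, hmc⟩ ⟨v, hv⟩ :=
          c.toSubgraph_connected.coe.dist_triangle
      _ ≤ (p.bypass.takeUntil m hmp).length + (p.bypass.dropUntil m hmp).length :=
          add_le_add (dist_le_length_of_not_hasShortcut hns hu hmc _)
            (dist_le_length_of_not_hasShortcut hns hmc hv _)
      _ = p.bypass.length := by rw [← length_append, take_spec]
  · push Not at hm
    by_contra! hlt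
    exact hns ⟨u, v, hu, hv, huv, p.bypass, p.bypass_isPath,
      fun w hw hwc => or_iff_not_imp_left.mpr (hm w hw hwc), hlt⟩
termination_by p.length
decreasing_by
  · exact (length_takeUntil_lt_length hmp hmv).trans_le p.length_bypass_le_length
  · exact (length_dropUntil_lt_length hmp hmu).trans_le p.length_bypass_le_length

theorem ne_getVert_of_not_hasShortcut {u : V} {c : G.Walk u u} (hc : c.IsCycle)
    (hns : ¬ HasShortcut G c) {d : V} (W : G.Walk u d) {k : ℕ}
    (hW : W.length < min k (c.length - k)) : d ≠ c.getVert k := by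
  rintro rfl
  have hk : k ≤ c.length := by omega
  have := (hc.min_le_dist_getVert hk).trans
    (dist_le_length_of_not_hasShortcut hns c.start_mem_verts_toSubgraph _ W)
  omega

theorem fWin_getVert_of_not_hasShortcut {u : V} {c : G.Walk u u} (hc : c.IsCycle)
    (hns : ¬ HasShortcut G c) :
    ∀ (n : ℕ) {i j : ℕ} {d : V} (W : G.Walk u d), W.length < i → i ≤ j →
      j + W.length < c.length → j - i ≤ 2 * n → FWin G n (c.getVert i) (c.getVert j) {d}
  | 0, i, j, _, _, _, hij, _, hn => congrArg c.getVert (by omega)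
  | n + 1, i, j, d, W, hi, hij, hj, hn => by
    obtain rfl | hij := hij.eq_or_lt
    · exact .inl rfl
    refine .inr ?_
    have hdi : d ≠ c.getVert (i + 1) := ne_getVert_of_not_hasShortcut hc hns W (by omega)
    obtain rfl | hij : j = i + 1 ∨ i + 1 < j := by omega
    · exact ⟨c.getVert (i + 1), c.getVert (i + 1), .inr (c.adj_getVert_succ (by omega)), .inl rfl,
        Multiset.mem_singleton.not.mpr hdi.symm, Multiset.mem_singleton.not.mpr hdi.symm, .inl rfl⟩
    have hdj : d ≠ c.getVert (j - 1) := ne_getVert_of_not_hasShortcut hc hns W (by omega)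
    have hadj : G.Adj (c.getVert j) (c.getVert (j - 1)) := by
      simpa [Nat.sub_add_cancel (by omega : 1 ≤ j)] using
        (c.adj_getVert_succ (i := j - 1) (by omega)).symm
    refine ⟨c.getVert (i + 1), c.getVert (j - 1), .inr (c.adj_getVert_succ (by omega)), .inr hadj,
      Multiset.mem_singleton.not.mpr hdi.symm, Multiset.mem_singleton.not.mpr hdj.symm,
      .inr fun D' hD' _ _ => ?_⟩
    obtain ⟨d', hd', rfl⟩ := mAdj_singleton_left hD'
    obtain ⟨W', hW'⟩ : ∃ W' : G.Walk u d', W'.length ≤ W.length + 1 := by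
      rcases hd' with rfl | hd'
      · exact ⟨W, by omega⟩
      · exact ⟨W.concat hd', by simp⟩
    exact fWin_getVert_of_not_hasShortcut hc hns n W' (by omega) (by omega) (by omega) (by omega)

end Rendezvous

open SimpleGraph Walk

/-- if Facilitator's agents occupy vertices `a`, `b` of a cycle `c` of
`G` without a shortcut, and Divider's unique agent occupies a vertex `z` of `c`
(distinct from `a` and `b`), then Facilitator has a winning strategy taking at most
`ℓ(c)/2` moves. -/
theorem facilitator_wins_on_shortcutless_cycle {V : Type*} (G : SimpleGraph V)
    {x : V} (c : G.Walk x x) (hc : c.IsCycle) (hns : ¬ HasShortcut G c)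
    (a b z : V) (ha : a ∈ c.toSubgraph.verts) (hb : b ∈ c.toSubgraph.verts)
    (hz : z ∈ c.toSubgraph.verts) (hza : z ≠ a) (hzb : z ≠ b) :
    FWin G (c.length / 2) a b {z} := by
  classical
  have hzc : z ∈ c.support := c.mem_verts_toSubgraph.mp hz
  set e := c.rotate z hzc
  have he : e.toSubgraph = c.toSubgraph := c.toSubgraph_rotate hzc
  have hns' : ¬ HasShortcut G e := by rwa [HasShortcut, he]
  obtain ⟨i, rfl, hi⟩ := mem_support_iff_exists_getVert.mp (e.mem_verts_toSubgraph.mp (he ▸ ha))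
  obtain ⟨j, rfl, hj⟩ := mem_support_iff_exists_getVert.mp (e.mem_verts_toSubgraph.mp (he ▸ hb))
  have hinner : ∀ {k}, k ≤ e.length → z ≠ e.getVert k → 0 < k ∧ k < e.length := fun hk hzk =>
    ⟨Nat.pos_of_ne_zero (by rintro rfl; exact hzk e.getVert_zero.symm),
      hk.lt_of_ne (by rintro rfl; exact hzk e.getVert_length.symm)⟩
  obtain ⟨hi0, hiL⟩ := hinner hi hza
  obtain ⟨hj0, hjL⟩ := hinner hj hzb
  have hlen : e.length = c.length := c.length_rotate z hzc
  obtain hij | hji := le_total i j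
  · exact fWin_getVert_of_not_hasShortcut (hc.rotate hzc) hns' _ nil hi0 hij
      (by rw [length_nil]; omega) (by omega)
  · exact (fWin_getVert_of_not_hasShortcut (hc.rotate hzc) hns' _ nil hj0 hji
      (by rw [length_nil]; omega) (by omega)).symm
end

section
/- Let G be a connected P_5-free graph and s, t distinct nonadjacent vertices. If Divider with k agents has a winning strategy in the rendezvous game starting from s and t, then the set S of vertices chosen by Divider for the initial placement of his agents is an (s,t)-separator; consequently d_G(s,t) = λ_G(s,t). -/
open Rendezvous

/-!
If a placement `D` of Divider leaves a walk from `s` to `t` in `G - D`, take a shortest one.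
A shortest path is induced, so in a `P₅`-free graph it has length at most three. Facilitator
then moves each agent one step along it; only a middle edge, whose ends are now occupied by
Facilitator, is left, and Divider cannot block it. Hence a winning placement is a separator.
Conversely Divider wins on any separator by never moving, so `d_G(s,t) = λ_G(s,t)`.
-/

namespace SimpleGraph

variable {V : Type*} {G : SimpleGraph V} {u v : V}

lemma Walk.dist_getVert_of_length_eq_dist {p : G.Walk u v} (hp : p.length = G.dist u v)
    {i : ℕ} (hi : i ≤ p.length) : G.dist u (p.getVert i) = i := by
  rw [← length_eq_dist_of_subwalk hp (p.isSubwalk_take i), Walk.take_length]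
  omega

/-- A shortest walk is an induced path: its first `n` vertices span a copy of `pathGraph n`. -/
def Walk.pathGraphEmbedding (p : G.Walk u v) (hp : p.length = G.dist u v) (n : ℕ)
    (hn : n ≤ p.length + 1) : pathGraph n ↪g G where
  toFun i := p.getVert i
  inj' i j hij := by
    have hi := p.dist_getVert_of_length_eq_dist hp (i := i) (by omega)
    have hj := p.dist_getVert_of_length_eq_dist hp (i := j) (by omega)
    have := congrArg (G.dist u) hij
    simp only at this
    exact Fin.ext (by omega)
  map_rel_iff' {i j} := by
    show G.Adj (p.getVert i) (p.getVert j) ↔ (pathGraph n).Adj i j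
    have hi := p.dist_getVert_of_length_eq_dist hp (i := i) (by omega)
    have hj := p.dist_getVert_of_length_eq_dist hp (i := j) (by omega)
    rw [pathGraph_adj]
    constructor
    · intro hadj
      have hne : i.val ≠ j.val := fun h => hadj.ne (by rw [h])
      rcases hadj.diff_dist_adj (u := u) with h | h | h <;> omega
    · rintro (h | h)
      · exact h ▸ p.adj_getVert_succ (by omega)
      · exact (h ▸ p.adj_getVert_succ (by omega)).symm

lemma Reachable.dist_lt_of_isEmpty_pathGraph_embedding {n : ℕ}
    (hP : IsEmpty (pathGraph (n + 1) ↪g G)) (h : G.Reachable u v) : G.dist u v < n := by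
  obtain ⟨p, hp⟩ := h.exists_walk_length_eq_dist
  by_contra! hn
  exact hP.elim (p.pathGraphEmbedding hp (n + 1) (by omega))

end SimpleGraph

namespace Rendezvous

open SimpleGraph

variable {V : Type*} {G : SimpleGraph V} {s t : V}

lemma Step.reachable_induce {T : Set V} {a b : V} (h : Step G a b) (ha : a ∈ T) (hb : b ∈ T) :
    (G.induce T).Reachable ⟨a, ha⟩ ⟨b, hb⟩ := by
  rcases h with rfl | h
  · rfl
  · exact (induce_adj.2 h : (G.induce T).Adj ⟨a, ha⟩ ⟨b, hb⟩).reachable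

lemma IsSeparator.not_reachable_induce {S : Finset V} (h : IsSeparator G s t S) :
    ¬ (G.induce {v | v ∉ S}).Reachable ⟨s, h.1⟩ ⟨t, h.2.1⟩ := fun ⟨w⟩ => by
  obtain ⟨v, hv, hvS⟩ := h.2.2 (w.map (Embedding.induce _).toHom)
  obtain ⟨x, -, rfl⟩ := List.mem_map.mp (w.support_map _ ▸ hv)
  exact x.2 hvS

/-- Divider's stationary strategy: while his agents never move, Facilitator's agents stay in
their components of `G - D`. -/
lemma not_fwin_of_not_reachable (D : Multiset V) (n : ℕ) :
    ∀ {a b : V} (ha : a ∉ D) (hb : b ∉ D),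
      ¬ (G.induce {v | v ∉ D}).Reachable ⟨a, ha⟩ ⟨b, hb⟩ → ¬ FWin G n a b D := by
  induction n with
  | zero =>
    rintro a b ha hb hab rfl
    exact hab .rfl
  | succ n ih =>
    rintro a b ha hb hab (rfl | ⟨a', b', haa', hbb', ha', hb', hwin⟩)
    · exact hab .rfl
    have ha'b' : ¬ (G.induce {v | v ∉ D}).Reachable ⟨a', ha'⟩ ⟨b', hb'⟩ := fun h =>
      hab (((haa'.reachable_induce ha ha').trans h).trans (hbb'.reachable_induce hb hb').symm)
    rcases hwin with rfl | hwin
    · exact ha'b' .rfl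
    · exact ih ha' hb' ha'b' (hwin D (Multiset.rel_refl_of_refl_on fun _ _ => Or.inl rfl) ha' hb')

lemma exists_fwin_of_walk_length_le_three {D : Multiset V} {a b : {v // v ∉ D}}
    (w : (G.induce {v | v ∉ D}).Walk a b) (hw : w.length ≤ 3) : ∃ n, FWin G n a b D := by
  match w, hw with
  | .nil, _ => exact ⟨0, rfl⟩
  | .cons h .nil, _ => exact ⟨1, .inr ⟨_, _, .inr h, .inl rfl, b.2, b.2, .inl rfl⟩⟩
  | .cons (v := x) h₁ (.cons h₂ .nil), _ =>
    exact ⟨1, .inr ⟨x, x, .inr h₁, .inr h₂.symm, x.2, x.2, .inl rfl⟩⟩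
  | .cons (v := x) h₁ (.cons (v := y) h₂ (.cons h₃ .nil)), _ =>
    exact ⟨2, .inr ⟨x, y, .inr h₁, .inr h₃.symm, x.2, y.2, .inr fun _ _ _ hy =>
      .inr ⟨y, y, .inr h₂, .inl rfl, hy, hy, .inl rfl⟩⟩⟩
  | .cons _ (.cons _ (.cons _ (.cons _ _))), hw => simp only [Walk.length_cons] at hw; omega

lemma exists_fwin_of_reachable (hP5 : IsEmpty (pathGraph 5 ↪g G)) {D : Multiset V}
    {a b : {v // v ∉ D}} (h : (G.induce {v | v ∉ D}).Reachable a b) : ∃ n, FWin G n a b D := by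
  obtain ⟨w, hw⟩ := h.exists_walk_length_eq_dist
  have := h.dist_lt_of_isEmpty_pathGraph_embedding (n := 4)
    ⟨fun e => hP5.elim ((Embedding.induce _).comp e)⟩
  exact exists_fwin_of_walk_length_le_three w (by omega)

lemma isSeparator_of_forall_not_fwin [DecidableEq V] (hP5 : IsEmpty (pathGraph 5 ↪g G))
    {D : Multiset V} (hs : s ∉ D) (ht : t ∉ D) (hD : ∀ n, ¬ FWin G n s t D) :
    IsSeparator G s t D.toFinset := by
  refine ⟨by simpa using hs, by simpa using ht, fun p => ?_⟩
  by_contra! hp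
  obtain ⟨n, hn⟩ := exists_fwin_of_reachable hP5 ⟨p.induce {v | v ∉ D} (by simpa using hp)⟩
  exact hD n hn

lemma IsSeparator.dividerWins {S : Finset V} (h : IsSeparator G s t S) :
    DividerWins G s t S.card :=
  ⟨S.val, rfl, h.1, h.2.1, fun n =>
    not_fwin_of_not_reachable S.val n h.1 h.2.1 h.not_reachable_induce⟩

lemma dNum_le_lambdaNum : dNum G s t ≤ lambdaNum G s t := by
  refine le_sInf ?_
  rintro _ ⟨S, rfl, hS⟩
  exact sInf_le ⟨S.card, rfl, hS.dividerWins⟩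

lemma lambdaNum_le_dNum [DecidableEq V]
    (h : ∀ D : Multiset V, s ∉ D → t ∉ D → (∀ n, ¬ FWin G n s t D) →
      IsSeparator G s t D.toFinset) :
    lambdaNum G s t ≤ dNum G s t := by
  refine le_sInf ?_
  rintro _ ⟨k, rfl, D, rfl, hs, ht, hD⟩
  calc lambdaNum G s t ≤ D.toFinset.card := sInf_le ⟨D.toFinset, rfl, h D hs ht hD⟩
    _ ≤ D.card := by exact_mod_cast D.toFinset_card_le

end Rendezvous

theorem p5_free_initial_placement_is_separator_general {V : Type*} [DecidableEq V]
    (G : SimpleGraph V)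
    (hP5 : IsEmpty (SimpleGraph.pathGraph 5 ↪g G))
    (s t : V) :
    (∀ D : Multiset V, s ∉ D → t ∉ D → (∀ n, ¬ FWin G n s t D) →
      IsSeparator G s t D.toFinset) ∧
    dNum G s t = lambdaNum G s t :=
  have hsep D := isSeparator_of_forall_not_fwin (G := G) (s := s) (t := t) (D := D) hP5
  ⟨hsep, dNum_le_lambdaNum.antisymm (lambdaNum_le_dNum hsep)⟩

/-- let `G` be a connected `P₅`-free graph and `s`, `t` distinct
nonadjacent vertices. If Divider with `k` agents has a winning strategy with initial
placement `D` (Facilitator can never force a meeting from `s`, `t` against `D`), then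
the set of vertices of `D` is an `(s,t)`-separator; consequently
`d_G(s,t) = λ_G(s,t)`. -/
theorem p5_free_initial_placement_is_separator {V : Type*} [DecidableEq V]
    (G : SimpleGraph V) (hconn : G.Connected)
    (hP5 : IsEmpty (SimpleGraph.pathGraph 5 ↪g G))
    (s t : V) (hst : s ≠ t) (hadj : ¬ G.Adj s t) :
    (∀ D : Multiset V, s ∉ D → t ∉ D → (∀ n, ¬ FWin G n s t D) →
      IsSeparator G s t D.toFinset) ∧
    dNum G s t = lambdaNum G s t :=
  p5_free_initial_placement_is_separator_general G hP5 s t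
end

section
/- Consider the rendezvous game with k Divider agents on a connected graph G limited to τ steps, where Facilitator starts at distinct vertices s, t lying in different modules of a fixed neighborhood decomposition U_1, …, U_ℓ of G. A strategy tree for Divider (the rooted tree of height τ whose nodes are positions reachable under Divider's strategy) is a winning strategy if and only if for every node v of the tree with associated position (F, D), the Facilitator-multiset F contains at most one vertex of each module U_i. -/
namespace Rendezvous

/-- `U` is a module of `G`: every vertex outside `U` is adjacent to all of `U`
or to none of `U`. -/
def IsModule {V : Type*} (G : SimpleGraph V) (U : Set V) : Prop :=
  ∀ v ∉ U, (∀ u ∈ U, G.Adj v u) ∨ (∀ u ∈ U, ¬ G.Adj v u)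

end Rendezvous

namespace Rendezvous

/-- Positions reachable in the rendezvous game when Divider plays the strategy `d`
(mapping the step number, Facilitator's new positions and Divider's current multiset
to Divider's new multiset), with Facilitator starting on `s`, `t` and Divider's
initial placement `D0`. This is the set of positions of the nodes of the strategy
tree of `d`, indexed by their depth. -/
inductive DReach {V : Type*} (G : SimpleGraph V)
    (d : ℕ → V → V → Multiset V → Multiset V) (s t : V) (D0 : Multiset V) :
    ℕ → V → V → Multiset V → Prop
  | init : DReach G d s t D0 0 s t D0
  | step {n : ℕ} {a b a' b' : V} {D : Multiset V} :
      DReach G d s t D0 n a b D → Step G a a' → Step G b b' → a' ∉ D → b' ∉ D →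
      DReach G d s t D0 (n + 1) a' b' (d n a' b' D)

variable {V : Type*} {G : SimpleGraph V}

theorem IsModule.adj_of_step_into {U : Set V} (hU : IsModule G U) {a a' u : V}
    (ha : a ∉ U) (ha' : a' ∈ U) (hstep : Step G a a') (hu : u ∈ U) : G.Adj a u := by
  have haa' : G.Adj a a' := hstep.resolve_left fun h => ha (h ▸ ha')
  exact (hU a ha).resolve_right (fun h => h a' ha' haa') u hu

theorem DReach.not_both_mem_of_isModule {d : ℕ → V → V → Multiset V → Multiset V}
    {s t : V} {D0 : Multiset V} {τ : ℕ}
    (hwin : ∀ n a b D, n ≤ τ → DReach G d s t D0 n a b D → a ≠ b)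
    {U : Set V} (hU : IsModule G U) (hst : ¬ (s ∈ U ∧ t ∈ U))
    {n : ℕ} {a b : V} {D : Multiset V} (hr : DReach G d s t D0 n a b D) (hn : n ≤ τ) :
    ¬ (a ∈ U ∧ b ∈ U) := by
  induction hr with
  | init => exact hst
  | @step m a b a' b' D hprev hsa hsb haD hbD ih =>
    rintro ⟨ha', hb'⟩
    by_cases hab : a ∈ U ∧ b ∈ U
    · exact ih (Nat.le_of_succ_le hn) hab
    rcases not_and_or.mp hab with ha | hb
    · have hab' : Step G a b' := Or.inr (hU.adj_of_step_into ha ha' hsa hb')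
      exact hwin (m + 1) b' b' _ hn (.step hprev hab' hsb hbD hbD) rfl
    · have hba' : Step G b a' := Or.inr (hU.adj_of_step_into hb hb' hsb ha')
      exact hwin (m + 1) a' a' _ hn (.step hprev hsa hba' haD haD) rfl

end Rendezvous

open Rendezvous

theorem strategy_tree_winning_iff_modules_general {V ι : Type*} (G : SimpleGraph V)
    (U : ι → Set V)
    (hpart : ∀ v : V, ∃! i, v ∈ U i)
    (hmod : ∀ i, IsModule G (U i))
    (τ : ℕ) (s t : V)
    (hstmod : ∀ i, ¬ (s ∈ U i ∧ t ∈ U i))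
    (d : ℕ → V → V → Multiset V → Multiset V) (D0 : Multiset V) :
    (∀ n a b D, n ≤ τ → DReach G d s t D0 n a b D → a ≠ b) ↔
    (∀ n a b D, n ≤ τ → DReach G d s t D0 n a b D →
      ∀ i, ¬ (a ∈ U i ∧ b ∈ U i)) := by
  constructor
  · intro hwin n a b D hn hr i
    exact hr.not_both_mem_of_isModule hwin (hmod i) (hstmod i) hn
  · intro hmodules n a b D hn hr hab
    obtain ⟨i, hi, -⟩ := hpart a
    exact hmodules n a b D hn hr i ⟨hi, hab ▸ hi⟩

/-- consider the rendezvous game with `k` Divider agents on a connected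
graph `G` limited to `τ` steps, where the vertex set of `G` is partitioned into
clique/independent modules `U i` and Facilitator starts at distinct vertices `s`, `t`
lying in different modules. Let `d` be a strategy of Divider with initial placement
`D0`, producing only legal moves from reachable positions. Then the strategy (tree)
is winning — i.e. in every reachable position within `τ` steps Facilitator's two
agents occupy distinct vertices — if and only if in every reachable position within
`τ` steps the multiset of Facilitator's agents contains at most one vertex of each
module `U i`. -/
theorem strategy_tree_winning_iff_modules {V ι : Type*} (G : SimpleGraph V)
    (hconn : G.Connected) (U : ι → Set V)
    (hpart : ∀ v : V, ∃! i, v ∈ U i)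
    (hmod : ∀ i, IsModule G (U i))
    (hci : ∀ i, G.IsClique (U i) ∨ (U i).Pairwise fun a b => ¬ G.Adj a b)
    (τ k : ℕ) (s t : V) (hst : s ≠ t)
    (hstmod : ∀ i, ¬ (s ∈ U i ∧ t ∈ U i))
    (d : ℕ → V → V → Multiset V → Multiset V) (D0 : Multiset V)
    (hD0card : Multiset.card D0 = k) (hsD0 : s ∉ D0) (htD0 : t ∉ D0)
    (hdcard : ∀ n a b D, Multiset.card (d n a b D) = k)
    (hvalid : ∀ n a b D a' b', DReach G d s t D0 n a b D →
      Step G a a' → Step G b b' → a' ∉ D → b' ∉ D →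
      MAdj G D (d n a' b' D) ∧ a' ∉ d n a' b' D ∧ b' ∉ d n a' b' D) :
    (∀ n a b D, n ≤ τ → DReach G d s t D0 n a b D → a ≠ b) ↔
    (∀ n a b D, n ≤ τ → DReach G d s t D0 n a b D →
      ∀ i, ¬ (a ∈ U i ∧ b ∈ U i)) :=
  strategy_tree_winning_iff_modules_general G U hpart hmod τ s t hstmod d D0
end
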